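/- arXiv:2203.06803 — 4 statements merged into one kernel-verified Lean document; each statement's English description precedes it below -/
import Mathlib

section
/- Fix integers H ≥ 2 and T with 1 ≤ T ≤ 2^{H−2}. Let b^1,…,b^T be i.i.d. uniform random elements of {0,1}^H. Then for any sequence of (deterministic) learner functions A_t : ({0,1}^H)^{t−1} × {0,1}^{H−1} → {0,1} (t = 1,…,T), the expected regret satisfies E[ max_{f : {0,1}^{H−1} → {0,1}} Σ_{t=1}^T 1[f(pref(b^t)) = last(b^t)] − Σ_{t=1}^T 1[A_t(b^1,…,b^{t−1}, pref(b^t)) = last(b^t)] ] ≥ T/4. (This is the combinatorial core of the theorem that, in the revealed-policy setting, competing with the best fixed general policy in hindsight against an opponent playing deterministic Markov policies incurs regret Ω(min{K, 2^H}).) -/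
/-- The first `H - 1` bits of `b ∈ {0,1}^H`. -/
def pref (H : ℕ) (b : Fin H → Bool) (i : Fin (H - 1)) : Bool :=
  b (Fin.castLE (Nat.sub_le H 1) i)

/-- The last bit of `b ∈ {0,1}^H`. -/
def lastBit (H : ℕ) (b : Fin H → Bool) : Bool :=
  if h : 0 < H then b ⟨H - 1, Nat.sub_lt h one_pos⟩ else false

lemma sum_ite_frac {α β : Type*} [Fintype α] [Fintype β] [Nonempty β]
    (p : α → Prop) [DecidablePred p]
    (C : β → α → α) (hC : ∀ y, Function.Bijective (C y))
    (hu : ∀ a, ∑ y : β, (if p (C y a) then (1:ℝ) else 0) = 1) :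
    ∑ a : α, (if p a then (1:ℝ) else 0) = (Fintype.card α : ℝ) / (Fintype.card β) := by
  have key : (Fintype.card β : ℝ) * ∑ a : α, (if p a then (1:ℝ) else 0) = Fintype.card α := by
    calc (Fintype.card β : ℝ) * ∑ a : α, (if p a then (1:ℝ) else 0)
        = ∑ _y : β, ∑ a : α, (if p a then (1:ℝ) else 0) := by
          rw [Finset.sum_const, Finset.card_univ, nsmul_eq_mul]
      _ = ∑ y : β, ∑ a : α, (if p (C y a) then (1:ℝ) else 0) := by
          refine Finset.sum_congr rfl fun y _ => ?_
          exact (Fintype.sum_bijective (C y) (hC y) _ _ fun a => rfl).symm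
      _ = ∑ a : α, ∑ y : β, (if p (C y a) then (1:ℝ) else 0) := Finset.sum_comm
      _ = ∑ a : α, (1:ℝ) := Finset.sum_congr rfl fun a _ => hu a
      _ = Fintype.card α := by simp
  have hb : (0:ℝ) < Fintype.card β := by
    have : 0 < Fintype.card β := Fintype.card_pos
    exact_mod_cast this
  rw [eq_div_iff hb.ne']
  linarith [key]

lemma bool_xor_iff (a b c : Bool) : a = xor b c ↔ c = xor a b := by
  revert a b c; decide

/-- Against i.i.d. uniform sequences `b^1, …, b^T ∈ {0,1}^H` (with `2 ≤ H` and
`1 ≤ T ≤ 2^(H-2)`), any deterministic learner — predicting the last bit of `b^t` from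
`b^1, …, b^{t-1}` and the first `H-1` bits of `b^t` — has expected regret at least `T/4`
against the best fixed predictor `f : {0,1}^{H-1} → {0,1}` in hindsight. -/
theorem stmt0 (H T : ℕ) (hH : 2 ≤ H) (hT1 : 1 ≤ T) (hT2 : T ≤ 2 ^ (H - 2))
    (A : (t : Fin T) → (Fin t.val → (Fin H → Bool)) → (Fin (H - 1) → Bool) → Bool) :
    (T : ℝ) / 4 ≤
      (∑ b : Fin T → Fin H → Bool,
          (Finset.univ.sup' Finset.univ_nonempty
              (fun f : (Fin (H - 1) → Bool) → Bool =>
                ∑ t : Fin T, if f (pref H (b t)) = lastBit H (b t) then (1 : ℝ) else 0)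
            - ∑ t : Fin T,
                if A t (fun s => b ⟨s.val, s.isLt.trans t.isLt⟩) (pref H (b t))
                    = lastBit H (b t)
                then (1 : ℝ) else 0))
        / (Fintype.card (Fin T → Fin H → Bool)) := by
  classical
  set N : ℕ := Fintype.card (Fin T → Fin H → Bool) with hNdef
  have hNpos : (0:ℝ) < N := by
    have : 0 < N := Fintype.card_pos
    exact_mod_cast this
  set lastIdx : Fin H := ⟨H - 1, by omega⟩ with hlastIdx
  have hlastBit : ∀ g : Fin H → Bool, lastBit H g = g lastIdx := fun g => dif_pos (by omega)
  have hprefUpd : ∀ (g : Fin H → Bool) (v : Bool),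
      pref H (Function.update g lastIdx v) = pref H g := by
    intro g v
    funext i
    have hne : (Fin.castLE (Nat.sub_le H 1) i) ≠ lastIdx := by
      apply Fin.ne_of_val_ne
      simpa [hlastIdx] using Nat.ne_of_lt i.isLt
    simp [pref, Function.update_of_ne hne]
  -- Part 1: learner gets exactly half
  have learner_sum : ∀ t : Fin T,
      (∑ b : Fin T → Fin H → Bool,
        if A t (fun s => b ⟨s.val, s.isLt.trans t.isLt⟩) (pref H (b t)) = lastBit H (b t)
        then (1:ℝ) else 0) = (N : ℝ) / 2 := by
    intro t
    set flip : (Fin T → Fin H → Bool) → (Fin T → Fin H → Bool) :=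
      fun b => Function.update b t (Function.update (b t) lastIdx (!(b t lastIdx))) with hflip
    have hrow : ∀ b, flip b t = Function.update (b t) lastIdx (!(b t lastIdx)) :=
      fun b => Function.update_self _ _ _
    have hother : ∀ b (u : Fin T), u ≠ t → flip b u = b u :=
      fun b u hu => Function.update_of_ne hu _ _
    have hinv : Function.Involutive flip := by
      intro b
      funext u
      by_cases hu : u = t
      · subst hu
        rw [hrow, hrow]
        simp [Function.update_idem, Function.update_self, Bool.not_not, Function.update_eq_self]
      · rw [hother _ _ hu, hother _ _ hu]
    have hp : ∀ b,
        (A t (fun s => (flip b) ⟨s.val, s.isLt.trans t.isLt⟩) (pref H ((flip b) t))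
            = lastBit H ((flip b) t))
        ↔ ¬ (A t (fun s => b ⟨s.val, s.isLt.trans t.isLt⟩) (pref H (b t)) = lastBit H (b t)) := by
      intro b
      have h1 : (fun s : Fin t.val => (flip b) ⟨s.val, s.isLt.trans t.isLt⟩)
          = (fun s => b ⟨s.val, s.isLt.trans t.isLt⟩) := by
        funext s
        exact hother b _ (Fin.ne_of_val_ne (Nat.ne_of_lt s.isLt))
      have h2 : pref H ((flip b) t) = pref H (b t) := by rw [hrow]; exact hprefUpd _ _
      have h3 : lastBit H ((flip b) t) = !(lastBit H (b t)) := by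
        rw [hlastBit, hlastBit, hrow, Function.update_self]
      rw [h1, h2, h3]
      cases A t (fun s => b ⟨s.val, s.isLt.trans t.isLt⟩) (pref H (b t)) <;>
        cases lastBit H (b t) <;> simp
    have := sum_ite_frac (β := Bool)
      (p := fun b => A t (fun s => b ⟨s.val, s.isLt.trans t.isLt⟩) (pref H (b t)) = lastBit H (b t))
      (C := fun y b => cond y (flip b) b)
      (by intro y; cases y
          · exact Function.bijective_id
          · exact hinv.bijective)
      (by
        intro b
        rw [Fintype.sum_bool]
        simp only [Bool.cond_true, Bool.cond_false]
        by_cases h : A t (fun s => b ⟨s.val, s.isLt.trans t.isLt⟩) (pref H (b t)) = lastBit H (b t)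
        · rw [if_pos h, if_neg (fun hf => (hp b).mp hf h)]
          norm_num
        · rw [if_neg h, if_pos ((hp b).mpr h)]
          norm_num)
    simpa [hNdef] using this
  -- Part 2: collision probability
  have coll_sum : ∀ s t : Fin T, s ≠ t →
      (∑ b : Fin T → Fin H → Bool, if pref H (b s) = pref H (b t) then (1:ℝ) else 0)
        = (N : ℝ) / 2 ^ (H - 1) := by
    intro s t hst
    set ext : (Fin (H-1) → Bool) → Fin H → Bool :=
      fun y j => if h : j.val < H - 1 then y ⟨j.val, h⟩ else false with hext
    set C : (Fin (H-1) → Bool) → (Fin T → Fin H → Bool) → (Fin T → Fin H → Bool) :=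
      fun y b => Function.update b t (fun j => xor (b t j) (ext y j)) with hCdef
    have hrow : ∀ y b, C y b t = fun j => xor (b t j) (ext y j) :=
      fun y b => Function.update_self _ _ _
    have hother : ∀ y b (u : Fin T), u ≠ t → C y b u = b u :=
      fun y b u hu => Function.update_of_ne hu _ _
    have hinv : ∀ y, Function.Involutive (C y) := by
      intro y b
      funext u
      by_cases hu : u = t
      · subst hu
        rw [hrow]
        funext j
        rw [hrow]
        simp
      · rw [hother _ _ _ hu, hother _ _ _ hu]
    have hpref : ∀ y b (i : Fin (H-1)), pref H (C y b t) i = xor (pref H (b t) i) (y i) := by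
      intro y b i
      have hlt : i.val < H - 1 := i.isLt
      simp [pref, hrow, hext, hlt, Fin.eta]
    have := sum_ite_frac (β := Fin (H-1) → Bool)
      (p := fun b => pref H (b s) = pref H (b t))
      (C := C)
      (fun y => (hinv y).bijective)
      (by
        intro b
        have hiff : ∀ y : Fin (H-1) → Bool,
            (pref H ((C y b) s) = pref H ((C y b) t))
            ↔ (y = fun i => xor (pref H (b s) i) (pref H (b t) i)) := by
          intro y
          rw [hother y b s hst]
          constructor
          · intro h
            funext i
            have hi := congrFun h i
            rw [hpref] at hi
            exact (bool_xor_iff _ _ _).mp hi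
          · intro h
            funext i
            rw [hpref, h]
            exact (bool_xor_iff _ _ _).mpr rfl
        simp only [hiff]
        simp)
    rw [this, hNdef]
    norm_num [Fintype.card_fun]
  -- Part 3: hindsight predictor bound
  have sup_bound : ∀ b : Fin T → Fin H → Bool,
      (T : ℝ) - (∑ t : Fin T, ∑ s ∈ Finset.univ.filter (fun s => s < t),
          if pref H (b s) = pref H (b t) then (1:ℝ) else 0)
        ≤ Finset.univ.sup' Finset.univ_nonempty
            (fun f : (Fin (H - 1) → Bool) → Bool =>
              ∑ t : Fin T, if f (pref H (b t)) = lastBit H (b t) then (1 : ℝ) else 0) := by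
    intro b
    set fhat : (Fin (H - 1) → Bool) → Bool := fun p =>
      if h : (Finset.univ.filter (fun u => pref H (b u) = p)).Nonempty
      then lastBit H (b ((Finset.univ.filter (fun u => pref H (b u) = p)).min' h)) else false
      with hfhat
    have main : ∀ t : Fin T,
        (1:ℝ) - (∑ s ∈ Finset.univ.filter (fun s => s < t),
            if pref H (b s) = pref H (b t) then (1:ℝ) else 0)
          ≤ if fhat (pref H (b t)) = lastBit H (b t) then (1:ℝ) else 0 := by
      intro t
      by_cases hcol : ∃ s, s < t ∧ pref H (b s) = pref H (b t)
      · obtain ⟨s, hs1, hs2⟩ := hcol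
        have hmem : s ∈ Finset.univ.filter (fun s' => s' < t) := by simp [hs1]
        have h1 : (1:ℝ) ≤ ∑ s' ∈ Finset.univ.filter (fun s' => s' < t),
            (if pref H (b s') = pref H (b t) then (1:ℝ) else 0) := by
          calc (1:ℝ) = if pref H (b s) = pref H (b t) then (1:ℝ) else 0 := by rw [if_pos hs2]
            _ ≤ _ := Finset.single_le_sum (f := fun s' =>
                  if pref H (b s') = pref H (b t) then (1:ℝ) else 0)
                  (fun i _ => by positivity) hmem
        have h2 : (0:ℝ) ≤ if fhat (pref H (b t)) = lastBit H (b t) then (1:ℝ) else 0 := by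
          positivity
        linarith
      · push_neg at hcol
        have hne : (Finset.univ.filter (fun u => pref H (b u) = pref H (b t))).Nonempty :=
          ⟨t, by simp⟩
        have hfix : fhat (pref H (b t)) = lastBit H (b t) := by
          rw [hfhat]
          simp only [dif_pos hne]
          have hmmem := Finset.min'_mem _ hne
          rw [Finset.mem_filter] at hmmem
          have hmle : (Finset.univ.filter (fun u => pref H (b u) = pref H (b t))).min' hne ≤ t :=
            Finset.min'_le _ t (by simp)
          rcases lt_or_eq_of_le hmle with h | h
          · exact absurd hmmem.2 (hcol _ h)
          · rw [h]
        rw [if_pos hfix]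
        have hz : ∀ s' ∈ Finset.univ.filter (fun s' => s' < t),
            (if pref H (b s') = pref H (b t) then (1:ℝ) else 0) = 0 := by
          intro s' hs'
          rw [Finset.mem_filter] at hs'
          rw [if_neg (hcol s' hs'.2)]
        rw [Finset.sum_eq_zero hz]
        norm_num
    calc (T : ℝ) - (∑ t : Fin T, ∑ s ∈ Finset.univ.filter (fun s => s < t),
            if pref H (b s) = pref H (b t) then (1:ℝ) else 0)
        = ∑ t : Fin T, ((1:ℝ) - ∑ s ∈ Finset.univ.filter (fun s => s < t),
            if pref H (b s) = pref H (b t) then (1:ℝ) else 0) := by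
          rw [Finset.sum_sub_distrib]
          simp
      _ ≤ ∑ t : Fin T, (if fhat (pref H (b t)) = lastBit H (b t) then (1:ℝ) else 0) :=
          Finset.sum_le_sum fun t _ => main t
      _ ≤ _ := Finset.le_sup' (f := fun f : (Fin (H - 1) → Bool) → Bool =>
            ∑ t : Fin T, if f (pref H (b t)) = lastBit H (b t) then (1 : ℝ) else 0)
            (Finset.mem_univ fhat)
  -- Part 4: assemble
  rw [le_div_iff₀ hNpos]
  rw [Finset.sum_sub_distrib]
  have hL : (∑ b : Fin T → Fin H → Bool, ∑ t : Fin T,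
      if A t (fun s => b ⟨s.val, s.isLt.trans t.isLt⟩) (pref H (b t)) = lastBit H (b t)
      then (1:ℝ) else 0) = (T : ℝ) * ((N:ℝ) / 2) := by
    rw [Finset.sum_comm]
    rw [Finset.sum_congr rfl fun t _ => learner_sum t]
    rw [Finset.sum_const, Finset.card_univ, Fintype.card_fin, nsmul_eq_mul]
  set G : ℕ := ∑ i ∈ Finset.range T, i with hGdef
  have hD : (∑ b : Fin T → Fin H → Bool, ∑ t : Fin T,
      ∑ s ∈ Finset.univ.filter (fun s => s < t),
        if pref H (b s) = pref H (b t) then (1:ℝ) else 0)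
      = (G : ℝ) * ((N:ℝ) / 2 ^ (H - 1)) := by
    rw [Finset.sum_comm]
    have hstep : ∀ t : Fin T,
        (∑ b : Fin T → Fin H → Bool, ∑ s ∈ Finset.univ.filter (fun s => s < t),
          if pref H (b s) = pref H (b t) then (1:ℝ) else 0)
        = (t.val : ℝ) * ((N:ℝ) / 2 ^ (H - 1)) := by
      intro t
      rw [Finset.sum_comm]
      rw [Finset.sum_congr rfl fun s hs => coll_sum s t
        (ne_of_lt (Finset.mem_filter.mp hs).2)]
      rw [Finset.sum_const, nsmul_eq_mul]
      congr 2
      have : Finset.univ.filter (fun s => s < t) = Finset.Iio t := by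
        ext x; simp
      rw [this, Fin.card_Iio]
    rw [Finset.sum_congr rfl fun t _ => hstep t, ← Finset.sum_mul]
    congr 1
    rw [← Nat.cast_sum]
    rw [Fin.sum_univ_eq_sum_range (fun i => i) T]
  have hsup : ∑ b : Fin T → Fin H → Bool, ((T : ℝ)
        - ∑ t : Fin T, ∑ s ∈ Finset.univ.filter (fun s => s < t),
            if pref H (b s) = pref H (b t) then (1:ℝ) else 0)
      ≤ ∑ b : Fin T → Fin H → Bool, Finset.univ.sup' Finset.univ_nonempty
            (fun f : (Fin (H - 1) → Bool) → Bool =>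
              ∑ t : Fin T, if f (pref H (b t)) = lastBit H (b t) then (1 : ℝ) else 0) :=
    Finset.sum_le_sum fun b _ => sup_bound b
  rw [Finset.sum_sub_distrib, Finset.sum_const, Finset.card_univ, ← hNdef, nsmul_eq_mul, hD]
    at hsup
  rw [hL]
  -- numeric finish
  have hGkey : 4 * G ≤ T * 2 ^ (H - 1) := by
    have h2G : G * 2 = T * (T - 1) := Finset.sum_range_id_mul_two T
    have h1 : 2 ^ (H - 1) = 2 * 2 ^ (H - 2) := by
      have hsplit : H - 1 = (H - 2) + 1 := by omega
      rw [hsplit, pow_succ]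
      ring
    have h2 : T * (T - 1) ≤ T * T := Nat.mul_le_mul_left T (Nat.sub_le T 1)
    have h3 : T * T ≤ T * 2 ^ (H - 2) := Nat.mul_le_mul_left T hT2
    calc 4 * G = 2 * (G * 2) := by ring
      _ = 2 * (T * (T - 1)) := by rw [h2G]
      _ ≤ 2 * (T * 2 ^ (H - 2)) := by
          exact Nat.mul_le_mul_left 2 (le_trans h2 h3)
      _ = T * 2 ^ (H - 1) := by rw [h1]; ring
  have hpow : (0:ℝ) < 2 ^ (H - 1) := by positivity
  have hGkeyR : 4 * (G:ℝ) ≤ (T:ℝ) * 2 ^ (H - 1) := by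
    exact_mod_cast hGkey
  have hfinal : (G : ℝ) * ((N:ℝ) / 2 ^ (H - 1)) ≤ (T:ℝ) / 4 * N := by
    rw [mul_div_assoc', div_le_iff₀ hpow]
    nlinarith [mul_le_mul_of_nonneg_right hGkeyR hNpos.le]
  nlinarith [hsup, hfinal]
end

section
/- Fix integers H ≥ 2 and T with 1 ≤ T ≤ 2^{H−2}, and let b^1,…,b^T be i.i.d. uniform random elements of {0,1}^H. Then E[ max_{f : {0,1}^{H−1} → {0,1}} Σ_{t=1}^T 1[f(pref(b^t)) = last(b^t)] ] ≥ (3/4)·T. -/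
lemma sum_eval1 {ι V : Type*} [Fintype ι] [DecidableEq ι] [Fintype V] (i : ι) (g : V → ℝ) :
    ∑ b : ι → V, g (b i) = (Fintype.card V : ℝ) ^ (Fintype.card ι - 1) * ∑ x, g x := by
  classical
  rw [Fintype.sum_equiv (Equiv.piSplitAt i (fun _ => V))
        (fun b => g (b i)) (fun p => g p.1) (fun b => rfl)]
  rw [Fintype.sum_prod_type]
  simp [Finset.sum_const, Fintype.card_fun, Fintype.card_subtype_compl, mul_comm,
    Finset.mul_sum, Finset.sum_mul]

lemma sum_eval2 {V : Type*} [Fintype V] {T : ℕ} (t t' : Fin T) (h : t' ≠ t)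
    (g : V → V → ℝ) :
    ∑ b : Fin T → V, g (b t) (b t') =
      (Fintype.card V : ℝ) ^ (T - 2) * ∑ x, ∑ y, g x y := by
  classical
  rw [Fintype.sum_equiv (Equiv.piSplitAt t (fun _ => V))
        (fun b => g (b t) (b t')) (fun p => g p.1 (p.2 ⟨t', h⟩)) (fun b => rfl)]
  rw [Fintype.sum_prod_type]
  have : ∀ x : V, ∑ r : {j : Fin T // j ≠ t} → V, g x (r ⟨t', h⟩)
      = (Fintype.card V : ℝ) ^ (T - 2) * ∑ y, g x y := by
    intro x
    rw [sum_eval1 (⟨t', h⟩ : {j : Fin T // j ≠ t}) (fun y => g x y)]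
    congr 2
    simp only [Fintype.card_subtype_compl, Fintype.card_fin, Fintype.card_unique]
    omega
  simp only [this]
  rw [Finset.mul_sum]

def flipLast (H : ℕ) (x : Fin H → Bool) (i : Fin H) : Bool :=
  if (i : ℕ) = H - 1 then !(x i) else x i

lemma key_iff {H : ℕ} (hH : 0 < H) (x y : Fin H → Bool) :
    (pref H y = pref H x ∧ lastBit H y ≠ lastBit H x) ↔ y = flipLast H x := by
  constructor
  · rintro ⟨hp, hl⟩
    funext i
    by_cases hi : (i : ℕ) = H - 1
    · have hix : i = ⟨H - 1, Nat.sub_lt hH one_pos⟩ := Fin.ext hi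
      have h1 : lastBit H y = y i := by rw [hix]; simp [lastBit, hH]
      have h2 : lastBit H x = x i := by rw [hix]; simp [lastBit, hH]
      simp only [flipLast, hi, if_pos]
      rw [h1, h2] at hl
      cases hxi : x i <;> cases hyi : y i <;> simp_all
    · have hlt : (i : ℕ) < H - 1 := by omega
      have := congrFun hp ⟨(i : ℕ), hlt⟩
      simp only [pref] at this
      have hc : (Fin.castLE (Nat.sub_le H 1) (⟨(i : ℕ), hlt⟩ : Fin (H - 1))) = i := rfl
      rw [hc] at this
      simp [flipLast, hi, this]
  · rintro rfl
    constructor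
    · funext i
      have hlt : ((Fin.castLE (Nat.sub_le H 1) i : Fin H) : ℕ) < H - 1 := i.isLt
      simp only [pref, flipLast]
      rw [if_neg (by omega)]
    · simp [lastBit, hH, flipLast]

lemma pair_sum {H : ℕ} (hH : 0 < H) :
    ∑ x : Fin H → Bool, ∑ y : Fin H → Bool,
      (if pref H y = pref H x ∧ lastBit H y ≠ lastBit H x then (1 : ℝ) else 0)
      = 2 ^ H := by
  classical
  have : ∀ x : Fin H → Bool, ∑ y : Fin H → Bool,
      (if pref H y = pref H x ∧ lastBit H y ≠ lastBit H x then (1 : ℝ) else 0) = 1 := by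
    intro x
    rw [Finset.sum_congr rfl (fun y _ => by rw [if_congr (key_iff hH x y) rfl rfl])]
    simp
  simp [this, Fintype.card_fun]

def fmaj {H T : ℕ} (b : Fin T → Fin H → Bool) (p : Fin (H - 1) → Bool) : Bool :=
  decide ((Finset.univ.filter (fun t => pref H (b t) = p ∧ lastBit H (b t) = false)).card ≤
          (Finset.univ.filter (fun t => pref H (b t) = p ∧ lastBit H (b t) = true)).card)

lemma wrong_exists {H T : ℕ} (b : Fin T → Fin H → Bool) (t : Fin T)
    (hw : fmaj b (pref H (b t)) ≠ lastBit H (b t)) :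
    ∃ t', t' ≠ t ∧ pref H (b t') = pref H (b t) ∧ lastBit H (b t') ≠ lastBit H (b t) := by
  classical
  set p := pref H (b t) with hp
  set n0 := (Finset.univ.filter (fun t => pref H (b t) = p ∧ lastBit H (b t) = false)).card
  set n1 := (Finset.univ.filter (fun t => pref H (b t) = p ∧ lastBit H (b t) = true)).card
  cases hl : lastBit H (b t) with
  | true =>
    have hlt : n1 < n0 := by
      by_contra hc
      exact hw (by simp_all [fmaj, n0, n1, decide_eq_true (not_lt.mp hc)])
    have : 0 < n0 := Nat.lt_of_le_of_lt (Nat.zero_le _) hlt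
    obtain ⟨t', ht'⟩ := Finset.card_pos.mp this
    simp only [Finset.mem_filter] at ht'
    exact ⟨t', fun h => by simp [h, hl] at ht', ht'.2.1, by simp [ht'.2.2, hl]⟩
  | false =>
    have hle : n0 ≤ n1 := by
      by_contra hc
      exact hw (by simp_all [fmaj, n0, n1])
    have h0 : 0 < n0 := Finset.card_pos.mpr ⟨t, by simp [hp, hl]⟩
    obtain ⟨t', ht'⟩ := Finset.card_pos.mp (Nat.lt_of_lt_of_le h0 hle)
    simp only [Finset.mem_filter] at ht'
    exact ⟨t', fun h => by simp [h, hl] at ht', ht'.2.1, by simp [ht'.2.2, hl]⟩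

lemma pointwise {H T : ℕ} (b : Fin T → Fin H → Bool) (t : Fin T) :
    (1 : ℝ) - ∑ t' ∈ Finset.univ.erase t,
        (if pref H (b t') = pref H (b t) ∧ lastBit H (b t') ≠ lastBit H (b t)
          then (1 : ℝ) else 0)
      ≤ if fmaj b (pref H (b t)) = lastBit H (b t) then (1 : ℝ) else 0 := by
  classical
  by_cases hc : fmaj b (pref H (b t)) = lastBit H (b t)
  · rw [if_pos hc]
    have : (0:ℝ) ≤ ∑ t' ∈ Finset.univ.erase t,
        (if pref H (b t') = pref H (b t) ∧ lastBit H (b t') ≠ lastBit H (b t)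
          then (1 : ℝ) else 0) :=
      Finset.sum_nonneg (fun _ _ => by positivity)
    linarith
  · rw [if_neg hc]
    obtain ⟨t', ht1, ht2, ht3⟩ := wrong_exists b t hc
    have hmem : t' ∈ Finset.univ.erase t := Finset.mem_erase.mpr ⟨ht1, Finset.mem_univ _⟩
    have : (1:ℝ) ≤ ∑ t' ∈ Finset.univ.erase t,
        (if pref H (b t') = pref H (b t) ∧ lastBit H (b t') ≠ lastBit H (b t)
          then (1 : ℝ) else 0) := by
      have := Finset.single_le_sum (f := fun t' =>
        (if pref H (b t') = pref H (b t) ∧ lastBit H (b t') ≠ lastBit H (b t)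
          then (1 : ℝ) else 0)) (fun _ _ => by positivity) hmem
      simpa [ht2, ht3] using this
    linarith

/-- For i.i.d. uniform `b^1, …, b^T ∈ {0,1}^H` with `2 ≤ H` and `1 ≤ T ≤ 2^(H-2)`, the
expected reward of the best fixed predictor `f : {0,1}^{H-1} → {0,1}` in hindsight is at
least `(3/4)·T`. -/
theorem stmt2 (H T : ℕ) (hH : 2 ≤ H) (hT1 : 1 ≤ T) (hT2 : T ≤ 2 ^ (H - 2)) :
    (3 / 4 : ℝ) * T ≤
      (∑ b : Fin T → Fin H → Bool,
          Finset.univ.sup' Finset.univ_nonempty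
            (fun f : (Fin (H - 1) → Bool) → Bool =>
              ∑ t : Fin T, if f (pref H (b t)) = lastBit H (b t) then (1 : ℝ) else 0))
        / (Fintype.card (Fin T → Fin H → Bool)) := by
  classical
  have hHpos : 0 < H := by omega
  have hcard : (Fintype.card (Fin T → Fin H → Bool) : ℝ) = 2 ^ (T * H) := by
    rw [Fintype.card_fun, Fintype.card_fun]
    simp only [Fintype.card_bool, Fintype.card_fin]
    push_cast
    rw [← pow_mul, mul_comm]
  rw [le_div_iff₀ (by rw [hcard]; positivity)]
  -- notation for the inner indicator double-sum
  set N : (Fin T → Fin H → Bool) → ℝ := fun b =>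
    ∑ t : Fin T, ∑ t' ∈ Finset.univ.erase t,
      (if pref H (b t') = pref H (b t) ∧ lastBit H (b t') ≠ lastBit H (b t)
        then (1 : ℝ) else 0) with hNdef
  have step1 : ∀ b : Fin T → Fin H → Bool,
      (T : ℝ) - N b ≤
        Finset.univ.sup' Finset.univ_nonempty
          (fun f : (Fin (H - 1) → Bool) → Bool =>
            ∑ t : Fin T, if f (pref H (b t)) = lastBit H (b t) then (1 : ℝ) else 0) := by
    intro b
    refine le_trans ?_ (Finset.le_sup' _ (Finset.mem_univ (fmaj b)))
    have heq : (T : ℝ) - N b = ∑ t : Fin T,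
        ((1 : ℝ) - ∑ t' ∈ Finset.univ.erase t,
          (if pref H (b t') = pref H (b t) ∧ lastBit H (b t') ≠ lastBit H (b t)
            then (1 : ℝ) else 0)) := by
      rw [Finset.sum_sub_distrib, Finset.sum_const, Finset.card_univ, Fintype.card_fin,
        nsmul_eq_mul, mul_one, hNdef]
    rw [heq]
    exact Finset.sum_le_sum (fun t _ => pointwise b t)
  have step2 : ∑ b : Fin T → Fin H → Bool, N b
      = (T : ℝ) * ((T - 1 : ℕ) : ℝ) * 2 ^ (H * (T - 2) + H) := by
    rw [hNdef]
    rw [Finset.sum_comm]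
    have inner : ∀ t : Fin T, ∑ b : Fin T → Fin H → Bool,
        ∑ t' ∈ Finset.univ.erase t,
          (if pref H (b t') = pref H (b t) ∧ lastBit H (b t') ≠ lastBit H (b t)
            then (1 : ℝ) else 0)
        = ((T - 1 : ℕ) : ℝ) * 2 ^ (H * (T - 2) + H) := by
      intro t
      rw [Finset.sum_comm]
      have hone : ∀ t' ∈ Finset.univ.erase t,
          ∑ b : Fin T → Fin H → Bool,
            (if pref H (b t') = pref H (b t) ∧ lastBit H (b t') ≠ lastBit H (b t)
              then (1 : ℝ) else 0) = 2 ^ (H * (T - 2) + H) := by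
        intro t' ht'
        have hne : t' ≠ t := (Finset.mem_erase.mp ht').1
        rw [sum_eval2 t t' hne (fun x y =>
          if pref H y = pref H x ∧ lastBit H y ≠ lastBit H x then (1 : ℝ) else 0)]
        rw [pair_sum hHpos]
        rw [Fintype.card_fun, Fintype.card_fin, Fintype.card_bool]
        push_cast
        rw [← pow_mul, ← pow_add]
      rw [Finset.sum_congr rfl hone, Finset.sum_const,
        Finset.card_erase_of_mem (Finset.mem_univ t), Finset.card_univ, Fintype.card_fin,
        nsmul_eq_mul]
    rw [Finset.sum_congr rfl (fun t _ => inner t), Finset.sum_const, Finset.card_univ,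
      Fintype.card_fin, nsmul_eq_mul]
    ring
  have hNbound : ∑ b : Fin T → Fin H → Bool, N b ≤ (T : ℝ) * 2 ^ (T * H) / 4 := by
    rw [step2]
    rcases Nat.lt_or_ge T 2 with hT | hT
    · interval_cases T
      simp
      positivity
    · obtain ⟨k, rfl⟩ : ∃ k, T = k + 2 := ⟨T - 2, by omega⟩
      have hexp : (k + 2) * H = (H * (k + 2 - 2) + H) + H := by
        simp only [Nat.add_sub_cancel]; ring
      have h4 : (2 : ℝ) ^ ((k + 2) * H) = 2 ^ (H * (k + 2 - 2) + H) * 2 ^ H := by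
        rw [hexp, pow_add]
      have h5 : H - 2 + 2 = H := by omega
      have hEH : (2 : ℝ) ^ H = 2 ^ (H - 2) * 4 := by
        calc (2 : ℝ) ^ H = 2 ^ (H - 2 + 2) := by rw [h5]
          _ = 2 ^ (H - 2) * 4 := by rw [pow_add]; norm_num
      have h1 : ((k + 2 - 1 : ℕ) : ℝ) ≤ 2 ^ (H - 2) := by
        have h2 : (k + 2 - 1 : ℕ) ≤ 2 ^ (H - 2) := by omega
        calc ((k + 2 - 1 : ℕ) : ℝ) ≤ ((2 ^ (H - 2) : ℕ) : ℝ) := Nat.cast_le.mpr h2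
          _ = 2 ^ (H - 2) := by push_cast; rfl
      rw [h4, hEH]
      have hA : (0 : ℝ) ≤ ((k + 2 : ℕ) : ℝ) := by positivity
      have hx : (0 : ℝ) ≤ (2 : ℝ) ^ (H * (k + 2 - 2) + H) := by positivity
      calc ((k + 2 : ℕ) : ℝ) * ((k + 2 - 1 : ℕ) : ℝ) * 2 ^ (H * (k + 2 - 2) + H)
          ≤ ((k + 2 : ℕ) : ℝ) * (2 : ℝ) ^ (H - 2) * 2 ^ (H * (k + 2 - 2) + H) :=
            mul_le_mul_of_nonneg_right (mul_le_mul_of_nonneg_left h1 hA) hx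
        _ = ((k + 2 : ℕ) : ℝ) * (2 ^ (H * (k + 2 - 2) + H) * ((2 : ℝ) ^ (H - 2) * 4)) / 4 := by
            ring
  have total : ∑ b : Fin T → Fin H → Bool, ((T : ℝ) - N b)
      ≤ ∑ b : Fin T → Fin H → Bool,
          Finset.univ.sup' Finset.univ_nonempty
            (fun f : (Fin (H - 1) → Bool) → Bool =>
              ∑ t : Fin T, if f (pref H (b t)) = lastBit H (b t) then (1 : ℝ) else 0) :=
    Finset.sum_le_sum (fun b _ => step1 b)
  have hsplit : ∑ b : Fin T → Fin H → Bool, ((T : ℝ) - N b)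
      = (T : ℝ) * 2 ^ (T * H) - ∑ b, N b := by
    rw [Finset.sum_sub_distrib, Finset.sum_const, Finset.card_univ, nsmul_eq_mul, hcard,
      mul_comm]
  rw [hcard]
  rw [hsplit] at total
  linarith
end

section
/- Let p be a probability distribution on a finite set of cardinality S, let X_1,…,X_n be i.i.d. samples from p, and let p̂_n denote the empirical distribution, p̂_n(s) = (1/n)·#{ i ∈ [n] : X_i = s }. Then for every ε > 0, Pr[ Σ_s |p̂_n(s) − p(s)| ≥ ε ] ≤ 2^S · exp(−n·ε²/2). -/
/-!
Both distributions have total mass 1, so the ℓ¹ distance between `p̂ₙ` and `p` is twice the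
excess `p̂ₙ(B) - p(B)` on the set `B = {p ≤ p̂ₙ}`. Hence the event forces
`n p̂ₙ(B) ≥ n (p(B) + ε/2)` for one of the `2^S` sets `B`. For a fixed `B`, `n p̂ₙ(B)` is a sum of
`n` independent Bernoulli(`p(B)`) indicators, so Hoeffding's inequality bounds that probability
by `exp(-2n(ε/2)²) = exp(-nε²/2)`, and a union bound over `B` finishes. The finite sum in the
statement is the measure of the event under the product measure `pⁿ`.
-/

open MeasureTheory ProbabilityTheory Finset Real

section

variable {ι α : Type*} [Fintype ι]

lemma sum_abs_sub_eq_two_mul_sum_filter (s : Finset α) {f g : α → ℝ}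
    (h : ∑ a ∈ s, f a = ∑ a ∈ s, g a) :
    ∑ a ∈ s, |f a - g a| = 2 * ∑ a ∈ s with g a ≤ f a, (f a - g a) := by
  have hzero : ∑ a ∈ s, (f a - g a) = 0 := by rw [sum_sub_distrib, h, sub_self]
  rw [← sum_filter_add_sum_filter_not s (fun a => g a ≤ f a)] at hzero ⊢
  have hpos : ∑ a ∈ s with g a ≤ f a, |f a - g a| = ∑ a ∈ s with g a ≤ f a, (f a - g a) :=
    sum_congr rfl fun a ha => abs_of_nonneg (sub_nonneg.2 (mem_filter.1 ha).2)
  have hneg : ∑ a ∈ s with ¬g a ≤ f a, |f a - g a| = -∑ a ∈ s with ¬g a ≤ f a, (f a - g a) := by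
    rw [← sum_neg_distrib]
    exact sum_congr rfl fun a ha => abs_of_neg (sub_neg.2 (not_le.1 (mem_filter.1 ha).2))
  linarith

lemma exists_card_filter_mem_ge_of_le_sum_abs [Fintype α] [DecidableEq α] {p : α → ℝ}
    (hp : ∑ a, p a = 1) (ω : ι → α) {ε : ℝ}
    (hε : ε ≤ ∑ a, |(#{i | ω i = a} : ℝ) / Fintype.card ι - p a|) :
    ∃ B : Finset α, Fintype.card ι * (∑ a ∈ B, p a + ε / 2) ≤ #{i | ω i ∈ B} := by
  set n : ℝ := (Fintype.card ι : ℝ)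
  have hcount (B : Finset α) : ∑ a ∈ B, (#{i | ω i = a} : ℝ) = #{i | ω i ∈ B} := by
    exact_mod_cast sum_card_fiberwise_eq_card_filter univ B ω
  rcases (show (0 : ℝ) ≤ n by positivity).eq_or_lt with hn | hn
  · exact ⟨∅, by simp [← hn]⟩
  set f : α → ℝ := fun a => (#{i | ω i = a} : ℝ) / n
  have hf : ∑ a, f a = ∑ a, p a := by
    rw [hp, ← sum_div, hcount univ, div_eq_one_iff_eq hn.ne']
    simp [n]
  refine ⟨univ.filter fun a => p a ≤ f a, ?_⟩
  rw [sum_abs_sub_eq_two_mul_sum_filter univ hf, sum_sub_distrib, ← sum_div, hcount] at hε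
  have := mul_le_mul_of_nonneg_left hε hn.le
  have := div_mul_cancel₀ (#{i | ω i ∈ univ.filter fun a => p a ≤ f a} : ℝ) hn.ne'
  linarith

lemma measureReal_pi_le_card_filter_mem_le [MeasurableSpace α] (μ : Measure α)
    [IsProbabilityMeasure μ] {B : Set α} [DecidablePred (· ∈ B)] (hB : MeasurableSet B)
    {s : ℝ} (hs : 0 ≤ s) :
    (Measure.pi fun _ : ι => μ).real
        {ω | Fintype.card ι * (μ.real B + s) ≤ #{i | ω i ∈ B}} ≤
      exp (-2 * Fintype.card ι * s ^ 2) := by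
  set X : α → ℝ := B.indicator 1
  have hX : Measurable X := measurable_one.indicator hB
  have hsubG (i : ι) : HasSubgaussianMGF (fun ω : ι → α => X (ω i) - μ.real B)
      ((‖(1 : ℝ) - 0‖₊ / 2) ^ 2) (Measure.pi fun _ : ι => μ) := by
    have h := hasSubgaussianMGF_of_mem_Icc (μ := μ) (a := 0) (b := 1) hX.aemeasurable
      (ae_of_all _ fun x => by by_cases hx : x ∈ B <;> simp [X, hx])
    rw [integral_indicator_one hB] at h
    have h' : HasSubgaussianMGF (fun x => X x - μ.real B) ((‖(1 : ℝ) - 0‖₊ / 2) ^ 2)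
        ((Measure.pi fun _ : ι => μ).map (Function.eval i)) := by
      rwa [(measurePreserving_eval _ i).map_eq]
    exact h'.of_map (measurePreserving_eval (fun _ : ι => μ) i).measurable.aemeasurable
  have hindep : iIndepFun (fun i (ω : ι → α) => X (ω i) - μ.real B)
      (Measure.pi fun _ : ι => μ) :=
    iIndepFun_pi (X := fun _ x => X x - μ.real B) fun _ => (hX.sub_const _).aemeasurable
  have h := HasSubgaussianMGF.measure_sum_ge_le_of_iIndepFun hindep (s := univ)
    (fun i _ => hsubG i) (mul_nonneg (Nat.cast_nonneg (Fintype.card ι)) hs)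
  convert h using 2
  · ext ω
    simp only [Set.mem_ofPred_eq, Set.indicator_apply, Pi.one_apply, sum_sub_distrib, sum_boole,
      sum_const, card_univ, nsmul_eq_mul, X]
    constructor <;> intro hω <;> linarith
  · rcases eq_or_ne (Fintype.card ι : ℝ) 0 with hn | hn
    · simp [hn]
    simp only [neg_mul, sub_zero, nnnorm_one, one_div, inv_pow, sum_const, card_univ,
      nsmul_eq_mul, NNReal.coe_mul, NNReal.coe_natCast, NNReal.coe_inv, NNReal.coe_pow,
      NNReal.coe_ofNat]
    field_simp

theorem measureReal_pi_le_sum_abs_empirical_sub_le [DecidableEq ι] [Fintype α] [DecidableEq α]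
    [MeasurableSpace α] [MeasurableSingletonClass α] (μ : Measure α) [IsProbabilityMeasure μ]
    {ε : ℝ} (hε : 0 ≤ ε) :
    (Measure.pi fun _ : ι => μ).real
        {ω | ε ≤ ∑ a, |(#{i | ω i = a} : ℝ) / Fintype.card ι - μ.real {a}|} ≤
      2 ^ Fintype.card α * exp (-(Fintype.card ι * ε ^ 2) / 2) := by
  have hμ : ∑ a, μ.real {a} = 1 := by simp
  calc _ ≤ (Measure.pi fun _ : ι => μ).real
        (⋃ B : Finset α, {ω | Fintype.card ι * (μ.real B + ε / 2) ≤ #{i | ω i ∈ B}}) := by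
        refine measureReal_mono fun ω hω => ?_
        obtain ⟨B, hB⟩ := exists_card_filter_mem_ge_of_le_sum_abs hμ ω hω
        exact Set.mem_iUnion.2 ⟨B, by simpa using hB⟩
    _ ≤ ∑ B : Finset α, (Measure.pi fun _ : ι => μ).real
        {ω | Fintype.card ι * (μ.real B + ε / 2) ≤ #{i | ω i ∈ B}} :=
        measureReal_iUnion_fintype_le _
    _ ≤ ∑ _B : Finset α, exp (-(Fintype.card ι * ε ^ 2) / 2) := by
        refine sum_le_sum fun B _ => ?_
        refine (measureReal_pi_le_card_filter_mem_le μ (s := ε / 2) B.measurableSet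
          (by positivity)).trans_eq ?_
        ring_nf
    _ = 2 ^ Fintype.card α * exp (-(Fintype.card ι * ε ^ 2) / 2) := by
        simp [Fintype.card_finset]

lemma measureReal_pi_eq_sum_prod [DecidableEq ι] [Fintype α] [MeasurableSpace α]
    [MeasurableSingletonClass α] (μ : Measure α) [IsFiniteMeasure μ] (E : Set (ι → α))
    [DecidablePred (· ∈ E)] :
    (Measure.pi fun _ : ι => μ).real E = ∑ ω, if ω ∈ E then ∏ i, μ.real {ω i} else 0 := by
  have hE : E = ((univ.filter (· ∈ E) : Finset (ι → α)) : Set (ι → α)) := by ext; simp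
  rw [← sum_filter]
  nth_rw 1 [hE]
  rw [← sum_measureReal_singleton]
  refine sum_congr rfl fun ω _ => ?_
  simp [measureReal_def, Measure.pi_singleton, ENNReal.toReal_prod]

end

theorem stmt6_general (α : Type) [Fintype α] [DecidableEq α] (S : ℕ) (hS : Fintype.card α = S)
    (p : α → ℝ) (hp0 : ∀ a, 0 ≤ p a) (hp1 : ∑ a, p a = 1)
    (n : ℕ) (ε : ℝ) (hε : 0 < ε) :
    ∑ ω : Fin n → α,
        (if ε ≤ ∑ a : α,
              |((Finset.univ.filter (fun i : Fin n => ω i = a)).card : ℝ) / n - p a|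
         then ∏ i : Fin n, p (ω i) else 0)
      ≤ 2 ^ S * Real.exp (-(n * ε ^ 2) / 2) := by
  let _ : MeasurableSpace α := ⊤
  have hp : ∑ a, ENNReal.ofReal (p a) = 1 := by
    rw [← ENNReal.ofReal_sum_of_nonneg fun a _ => hp0 a, hp1, ENNReal.ofReal_one]
  set μ := (PMF.ofFintype _ hp).toMeasure
  have hμ (a : α) : μ.real {a} = p a := by
    simp [μ, measureReal_def, hp0]
  have h := measureReal_pi_le_sum_abs_empirical_sub_le (ι := Fin n) μ hε.le
  rw [measureReal_pi_eq_sum_prod] at h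
  simpa only [hμ, Set.mem_ofPred_eq, Fintype.card_fin, hS] using h

/-- ℓ¹ concentration of the empirical distribution: if `p` is a probability mass function on
a finite set of cardinality `S` and `X_1, …, X_n` are i.i.d. samples from `p`, then for every
`ε > 0`, the probability that `Σ_s |p̂_n(s) - p(s)| ≥ ε` is at most `2^S · exp(-n ε²/2)`.
The probability of the event is written out as a sum of the i.i.d. product weights over
all outcomes `ω ∈ αⁿ` belonging to the event. -/
theorem stmt6 (α : Type) [Fintype α] [DecidableEq α] (S : ℕ) (hS : Fintype.card α = S)
    (p : α → ℝ) (hp0 : ∀ a, 0 ≤ p a) (hp1 : ∑ a, p a = 1)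
    (n : ℕ) (hn : 0 < n) (ε : ℝ) (hε : 0 < ε) :
    ∑ ω : Fin n → α,
        (if ε ≤ ∑ a : α,
              |((Finset.univ.filter (fun i : Fin n => ω i = a)).card : ℝ) / n - p a|
         then ∏ i : Fin n, p (ω i) else 0)
      ≤ 2 ^ S * Real.exp (-(n * ε ^ 2) / 2) :=
  stmt6_general α S hS p hp0 hp1 n ε hε
end

section
/- Fix finite sets 𝒮 and 𝒜, horizon H, transition kernels P_h : 𝒮×𝒜 → Δ(𝒮), estimated kernels P̂_h : 𝒮×𝒜 → Δ(𝒮), rewards r_h : 𝒮×𝒜 → [0,1], and bonuses β_h : 𝒮×𝒜 → [0,∞) (h = 1,…,H). Assume that for all h, s, a: Σ_{s'} |P̂_h(s'|s,a) − P_h(s'|s,a)| ≤ β_h(s,a)/H. Then for every general policy π, every step h ∈ {1,…,H+1}, and every trajectory τ_h: 0 ≤ ūV^π_h(τ_h) − V^π_h(τ_h) ≤ ṼV^π_h(τ_h), where V, ūV, ṼV are the true, optimistic, and auxiliary value functions defined by the backward recursions in the context. -/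
noncomputable section

/-- True value function of a general (history-dependent) policy `π`, defined by backward
recursion on the number `m` of remaining steps: `V^π_h = trueV H P r π (H + 1 - h)`, and a
call with `m + 1` remaining steps corresponds to step `h = H - m`. A trajectory
`τ_h = (s₁,a₁,…,s_{h-1},a_{h-1},s_h)` is encoded as a pair `(list of (state, action), current
state)`. -/
def trueV {S A : Type} [Fintype S] [Fintype A] (H : ℕ) (P : ℕ → S → A → S → ℝ)
    (r : ℕ → S → A → ℝ) (π : List (S × A) × S → A → ℝ) :
    ℕ → List (S × A) × S → ℝ
  | 0, _ => 0
  | m + 1, τ =>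
      ∑ a : A, π τ a *
        (r (H - m) τ.2 a +
          ∑ s' : S, P (H - m) τ.2 a s' * trueV H P r π m (τ.1 ++ [(τ.2, a)], s'))

/-- Optimistic value function `ūV^π`, defined with the estimated transitions `P̂`, the
reward `r`, the exploration bonus `β`, and truncation at `H - h + 1 = m + 1`. -/
def upV {S A : Type} [Fintype S] [Fintype A] (H : ℕ) (Phat : ℕ → S → A → S → ℝ)
    (r : ℕ → S → A → ℝ) (β : ℕ → S → A → ℝ) (π : List (S × A) × S → A → ℝ) :
    ℕ → List (S × A) × S → ℝ
  | 0, _ => 0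
  | m + 1, τ =>
      ∑ a : A, π τ a *
        min ((∑ s' : S, Phat (H - m) τ.2 a s' * upV H Phat r β π m (τ.1 ++ [(τ.2, a)], s'))
              + r (H - m) τ.2 a + β (H - m) τ.2 a)
          ((m : ℝ) + 1)

/-- Auxiliary value function `ṼV^π`, defined with the true transitions `P`, no reward,
doubled bonus `2β`, and truncation at `H - h + 1 = m + 1`. -/
def tildeV {S A : Type} [Fintype S] [Fintype A] (H : ℕ) (P : ℕ → S → A → S → ℝ)
    (β : ℕ → S → A → ℝ) (π : List (S × A) × S → A → ℝ) :
    ℕ → List (S × A) × S → ℝ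
  | 0, _ => 0
  | m + 1, τ =>
      ∑ a : A, π τ a *
        min ((∑ s' : S, P (H - m) τ.2 a s' * tildeV H P β π m (τ.1 ++ [(τ.2, a)], s'))
              + 2 * β (H - m) τ.2 a)
          ((m : ℝ) + 1)


section Aux

variable {S A : Type} [Fintype S] [Fintype A]

private lemma exp_bounds (w g : S → ℝ) (lo hi : ℝ) (hw0 : ∀ s, 0 ≤ w s)
    (hw1 : ∑ s : S, w s = 1) (hlo : ∀ s, lo ≤ g s) (hhi : ∀ s, g s ≤ hi) :
    lo ≤ ∑ s : S, w s * g s ∧ ∑ s : S, w s * g s ≤ hi := by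
  constructor
  · have h : ∑ s : S, w s * lo ≤ ∑ s : S, w s * g s :=
      Finset.sum_le_sum fun s _ => mul_le_mul_of_nonneg_left (hlo s) (hw0 s)
    calc lo = (∑ s : S, w s) * lo := by rw [hw1, one_mul]
      _ = ∑ s : S, w s * lo := Finset.sum_mul ..
      _ ≤ _ := h
  · have h : ∑ s : S, w s * g s ≤ ∑ s : S, w s * hi :=
      Finset.sum_le_sum fun s _ => mul_le_mul_of_nonneg_left (hhi s) (hw0 s)
    calc ∑ s : S, w s * g s ≤ ∑ s : S, w s * hi := h
      _ = (∑ s : S, w s) * hi := (Finset.sum_mul ..).symm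
      _ = hi := by rw [hw1, one_mul]

private lemma abs_sum_diff_le (p q f : S → ℝ) (C ε : ℝ)
    (hf0 : ∀ s, 0 ≤ f s) (hfC : ∀ s, f s ≤ C)
    (hpq : ∑ s : S, |p s - q s| ≤ ε) (hε : 0 ≤ ε) (hC : 0 ≤ C) :
    |∑ s : S, (p s - q s) * f s| ≤ ε * C := by
  calc |∑ s : S, (p s - q s) * f s| ≤ ∑ s : S, |(p s - q s) * f s| :=
        Finset.abs_sum_le_sum_abs _ _
    _ = ∑ s : S, |p s - q s| * f s := by
        refine Finset.sum_congr rfl fun s _ => ?_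
        rw [abs_mul, abs_of_nonneg (hf0 s)]
    _ ≤ ∑ s : S, |p s - q s| * C :=
        Finset.sum_le_sum fun s _ => mul_le_mul_of_nonneg_left (hfC s) (abs_nonneg _)
    _ = (∑ s : S, |p s - q s|) * C := (Finset.sum_mul ..).symm
    _ ≤ ε * C := mul_le_mul_of_nonneg_right hpq hC

private lemma trueV_bounds (H : ℕ) (P : ℕ → S → A → S → ℝ) (r : ℕ → S → A → ℝ)
    (π : List (S × A) × S → A → ℝ)
    (hP0 : ∀ h s a s', 0 ≤ P h s a s') (hP1 : ∀ h s a, ∑ s' : S, P h s a s' = 1)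
    (hr0 : ∀ h s a, 0 ≤ r h s a) (hr1 : ∀ h s a, r h s a ≤ 1)
    (hπ0 : ∀ τ a, 0 ≤ π τ a) (hπ1 : ∀ τ, ∑ a : A, π τ a = 1) :
    ∀ m τ, 0 ≤ trueV H P r π m τ ∧ trueV H P r π m τ ≤ (m : ℝ) := by
  intro m
  induction m with
  | zero => intro τ; simp [trueV]
  | succ m ih =>
    intro τ
    have key : ∀ a : A, 0 ≤ r (H - m) τ.2 a +
        ∑ s' : S, P (H - m) τ.2 a s' * trueV H P r π m (τ.1 ++ [(τ.2, a)], s') ∧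
        r (H - m) τ.2 a +
        ∑ s' : S, P (H - m) τ.2 a s' * trueV H P r π m (τ.1 ++ [(τ.2, a)], s') ≤ (m : ℝ) + 1 := by
      intro a
      have h := exp_bounds (P (H - m) τ.2 a)
        (fun s' => trueV H P r π m (τ.1 ++ [(τ.2, a)], s')) 0 (m : ℝ)
        (hP0 _ _ _) (hP1 _ _ _) (fun s' => (ih _).1) (fun s' => (ih _).2)
      have h1 := hr0 (H - m) τ.2 a
      have h2 := hr1 (H - m) τ.2 a
      exact ⟨by linarith [h.1], by linarith [h.2]⟩
    simp only [trueV]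
    have h := exp_bounds (π τ) _ 0 ((m : ℝ) + 1) (hπ0 τ) (hπ1 τ)
      (fun a => (key a).1) (fun a => (key a).2)
    push_cast
    exact h

private lemma upV_bounds (H : ℕ) (Phat : ℕ → S → A → S → ℝ) (r : ℕ → S → A → ℝ)
    (β : ℕ → S → A → ℝ) (π : List (S × A) × S → A → ℝ)
    (hPhat0 : ∀ h s a s', 0 ≤ Phat h s a s')
    (hPhat1 : ∀ h s a, ∑ s' : S, Phat h s a s' = 1)
    (hr0 : ∀ h s a, 0 ≤ r h s a) (hβ : ∀ h s a, 0 ≤ β h s a)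
    (hπ0 : ∀ τ a, 0 ≤ π τ a) (hπ1 : ∀ τ, ∑ a : A, π τ a = 1) :
    ∀ m τ, 0 ≤ upV H Phat r β π m τ ∧ upV H Phat r β π m τ ≤ (m : ℝ) := by
  intro m
  induction m with
  | zero => intro τ; simp [upV]
  | succ m ih =>
    intro τ
    have key : ∀ a : A, (0 : ℝ) ≤
        min ((∑ s' : S, Phat (H - m) τ.2 a s' * upV H Phat r β π m (τ.1 ++ [(τ.2, a)], s'))
            + r (H - m) τ.2 a + β (H - m) τ.2 a) ((m : ℝ) + 1) ∧
        min ((∑ s' : S, Phat (H - m) τ.2 a s' * upV H Phat r β π m (τ.1 ++ [(τ.2, a)], s'))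
            + r (H - m) τ.2 a + β (H - m) τ.2 a) ((m : ℝ) + 1) ≤ (m : ℝ) + 1 := by
      intro a
      refine ⟨le_min ?_ (by positivity), min_le_right _ _⟩
      have hs : (0 : ℝ) ≤ ∑ s' : S, Phat (H - m) τ.2 a s' *
          upV H Phat r β π m (τ.1 ++ [(τ.2, a)], s') :=
        Finset.sum_nonneg fun s' _ => mul_nonneg (hPhat0 _ _ _ _) (ih _).1
      have h1 := hr0 (H - m) τ.2 a
      have h2 := hβ (H - m) τ.2 a
      linarith
    simp only [upV]
    have h := exp_bounds (π τ) _ 0 ((m : ℝ) + 1) (hπ0 τ) (hπ1 τ)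
      (fun a => (key a).1) (fun a => (key a).2)
    push_cast
    exact h

end Aux

/-- Optimism: if the estimated transition kernels are `ℓ¹`-close to the true ones,
`Σ_{s'} |P̂_h(s'|s,a) - P_h(s'|s,a)| ≤ β_h(s,a)/H`, then for every general policy `π`,
every step `h ∈ {1,…,H+1}` (i.e. every number `m = H + 1 - h ≤ H` of remaining steps) and
every trajectory `τ`, we have `0 ≤ ūV^π_h(τ) - V^π_h(τ) ≤ ṼV^π_h(τ)`. -/
theorem stmt7 {S A : Type} [Fintype S] [Fintype A] (H : ℕ) (hH : 1 ≤ H)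
    (P Phat : ℕ → S → A → S → ℝ) (r : ℕ → S → A → ℝ) (β : ℕ → S → A → ℝ)
    (π : List (S × A) × S → A → ℝ)
    (hP0 : ∀ h s a s', 0 ≤ P h s a s') (hP1 : ∀ h s a, ∑ s' : S, P h s a s' = 1)
    (hPhat0 : ∀ h s a s', 0 ≤ Phat h s a s')
    (hPhat1 : ∀ h s a, ∑ s' : S, Phat h s a s' = 1)
    (hr0 : ∀ h s a, 0 ≤ r h s a) (hr1 : ∀ h s a, r h s a ≤ 1)
    (hβ : ∀ h s a, 0 ≤ β h s a)
    (hπ0 : ∀ τ a, 0 ≤ π τ a) (hπ1 : ∀ τ, ∑ a : A, π τ a = 1)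
    (hclose : ∀ h s a, 1 ≤ h → h ≤ H →
      ∑ s' : S, |Phat h s a s' - P h s a s'| ≤ β h s a / H) :
    ∀ m ≤ H, ∀ τ : List (S × A) × S,
      0 ≤ upV H Phat r β π m τ - trueV H P r π m τ ∧
        upV H Phat r β π m τ - trueV H P r π m τ ≤ tildeV H P β π m τ := by
  have tvb := trueV_bounds H P r π hP0 hP1 hr0 hr1 hπ0 hπ1
  have uvb := upV_bounds H Phat r β π hPhat0 hPhat1 hr0 hβ hπ0 hπ1
  intro m
  induction m with
  | zero => intro _ τ; simp [trueV, upV, tildeV]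
  | succ m ih =>
    intro hm τ
    have hmH : m ≤ H := by omega
    have ih' := ih hmH
    have hstep1 : 1 ≤ H - m := by omega
    have hstep2 : H - m ≤ H := by omega
    have hHpos : (0 : ℝ) < (H : ℝ) := by exact_mod_cast Nat.pos_of_ne_zero (by omega)
    have key : ∀ a : A,
        0 ≤ min ((∑ s' : S, Phat (H - m) τ.2 a s' * upV H Phat r β π m (τ.1 ++ [(τ.2, a)], s'))
              + r (H - m) τ.2 a + β (H - m) τ.2 a) ((m : ℝ) + 1)
            - (r (H - m) τ.2 a +
               ∑ s' : S, P (H - m) τ.2 a s' * trueV H P r π m (τ.1 ++ [(τ.2, a)], s')) ∧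
        min ((∑ s' : S, Phat (H - m) τ.2 a s' * upV H Phat r β π m (τ.1 ++ [(τ.2, a)], s'))
              + r (H - m) τ.2 a + β (H - m) τ.2 a) ((m : ℝ) + 1)
            - (r (H - m) τ.2 a +
               ∑ s' : S, P (H - m) τ.2 a s' * trueV H P r π m (τ.1 ++ [(τ.2, a)], s'))
          ≤ min ((∑ s' : S, P (H - m) τ.2 a s' * tildeV H P β π m (τ.1 ++ [(τ.2, a)], s'))
              + 2 * β (H - m) τ.2 a) ((m : ℝ) + 1) := by
      intro a
      set u : S → ℝ := fun s' => upV H Phat r β π m (τ.1 ++ [(τ.2, a)], s') with hu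
      set v : S → ℝ := fun s' => trueV H P r π m (τ.1 ++ [(τ.2, a)], s') with hv
      set t : S → ℝ := fun s' => tildeV H P β π m (τ.1 ++ [(τ.2, a)], s') with ht
      set pb : S → ℝ := fun s' => Phat (H - m) τ.2 a s' with hpb
      set p : S → ℝ := fun s' => P (H - m) τ.2 a s' with hp
      set rr : ℝ := r (H - m) τ.2 a with hrr
      set b : ℝ := β (H - m) τ.2 a with hb
      have hb0 : 0 ≤ b := hβ _ _ _
      have hc : ∑ s' : S, |pb s' - p s'| ≤ b / H := hclose _ _ _ hstep1 hstep2
      have hbH : 0 ≤ b / H := div_nonneg hb0 hHpos.le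
      have hmR : (0 : ℝ) ≤ (m : ℝ) := Nat.cast_nonneg m
      have habs1 : |∑ s' : S, (pb s' - p s') * v s'| ≤ (b / H) * m :=
        abs_sum_diff_le pb p v (m : ℝ) (b / H) (fun s' => (tvb m _).1)
          (fun s' => (tvb m _).2) hc hbH hmR
      have habs2 : |∑ s' : S, (pb s' - p s') * u s'| ≤ (b / H) * m :=
        abs_sum_diff_le pb p u (m : ℝ) (b / H) (fun s' => (uvb m _).1)
          (fun s' => (uvb m _).2) hc hbH hmR
      have hbHm : (b / H) * m ≤ b := by
        calc (b / H) * m ≤ (b / H) * H :=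
          mul_le_mul_of_nonneg_left (by exact_mod_cast Nat.cast_le.mpr hmH) hbH
        _ = b := by field_simp
      have A1 : -b ≤ ∑ s' : S, (pb s' - p s') * v s' := by
        have := neg_abs_le (∑ s' : S, (pb s' - p s') * v s')
        linarith
      have A2 : ∑ s' : S, (pb s' - p s') * u s' ≤ b := by
        have := le_abs_self (∑ s' : S, (pb s' - p s') * u s')
        linarith
      have D1 : (∑ s' : S, pb s' * u s') - (∑ s' : S, p s' * v s')
          = (∑ s' : S, pb s' * (u s' - v s')) + ∑ s' : S, (pb s' - p s') * v s' := by
        rw [← Finset.sum_add_distrib, ← Finset.sum_sub_distrib]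
        exact Finset.sum_congr rfl fun s _ => by ring
      have D2 : (∑ s' : S, pb s' * u s') - (∑ s' : S, p s' * v s')
          = (∑ s' : S, p s' * (u s' - v s')) + ∑ s' : S, (pb s' - p s') * u s' := by
        rw [← Finset.sum_add_distrib, ← Finset.sum_sub_distrib]
        exact Finset.sum_congr rfl fun s _ => by ring
      have S1 : (0 : ℝ) ≤ ∑ s' : S, pb s' * (u s' - v s') :=
        Finset.sum_nonneg fun s' _ => mul_nonneg (hPhat0 _ _ _ _) (ih' _).1
      have S2 : ∑ s' : S, p s' * (u s' - v s') ≤ ∑ s' : S, p s' * t s' :=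
        Finset.sum_le_sum fun s' _ => mul_le_mul_of_nonneg_left (ih' _).2 (hP0 _ _ _ _)
      have hY := exp_bounds p v 0 (m : ℝ) (hP0 _ _ _) (hP1 _ _ _)
        (fun s' => (tvb m _).1) (fun s' => (tvb m _).2)
      have hr0' := hr0 (H - m) τ.2 a
      have hr1' := hr1 (H - m) τ.2 a
      constructor
      · rw [sub_nonneg]
        refine le_min ?_ (by linarith [hY.2])
        linarith [D1, S1, A1]
      · refine le_min ?_ ?_
        · have h1 : min ((∑ s' : S, pb s' * u s') + rr + b) ((m : ℝ) + 1)
              ≤ (∑ s' : S, pb s' * u s') + rr + b := min_le_left _ _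
          linarith [D2, S2, A2]
        · have h1 : min ((∑ s' : S, pb s' * u s') + rr + b) ((m : ℝ) + 1)
              ≤ (m : ℝ) + 1 := min_le_right _ _
          linarith [hY.1]
    simp only [trueV, upV, tildeV]
    rw [← Finset.sum_sub_distrib]
    constructor
    · refine Finset.sum_nonneg fun a _ => ?_
      rw [← mul_sub]
      exact mul_nonneg (hπ0 τ a) (key a).1
    · refine Finset.sum_le_sum fun a _ => ?_
      rw [← mul_sub]
      exact mul_le_mul_of_nonneg_left (key a).2 (hπ0 τ a)
end
end
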